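/- On M = {(x,y) ∈ ℝ² : x³ < y < x² and 0 < x < 1/2}, the Lorentzian metric g = 2·(y·log y)/(x·log x)·dx² - (dx⊗dy + dy⊗dx) is well-defined (i.e., has Lorentzian signature at every point of M), and the vector fields L = ∂_x + (y/x)·(log y/log x)·∂_y and ∂_y are g-null. -/

import Mathlib

open Matrix

noncomputable section

/-- The metric `g = 2(y log y)/(x log x) dx² - (dx⊗dy + dy⊗dx)` of Example 3.6,
as a matrix in the coordinates `(x,y)`. -/
def gEx (x y : ℝ) : Matrix (Fin 2) (Fin 2) ℝ :=
  !![2 * (y * Real.log y) / (x * Real.log x), -1; -1, 0]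

section NullForm

variable {R : Type*} [CommRing R]

theorem det_nullForm (a : R) : (!![a, -1; -1, 0] : Matrix (Fin 2) (Fin 2) R).det = -1 := by
  simp [det_fin_two_of]

theorem dotProduct_nullForm_mulVec (a u v : R) :
    ![u, v] ⬝ᵥ (!![a, -1; -1, 0] : Matrix (Fin 2) (Fin 2) R) *ᵥ ![u, v] = a * u ^ 2 - 2 * u * v := by
  simp only [dotProduct, mulVec, Fin.sum_univ_two, of_apply, cons_val', cons_val_zero,
    cons_val_one, empty_val', cons_val_fin_one]
  ring

end NullForm

theorem stmt7 :
    ∀ x y : ℝ, 0 < x → x < 1/2 → x^3 < y → y < x^2 →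
      (gEx x y).det < 0 ∧
      (![1, (y/x) * (Real.log y / Real.log x)] ⬝ᵥ
        (gEx x y).mulVec ![1, (y/x) * (Real.log y / Real.log x)]) = 0 ∧
      (![0, (1:ℝ)] ⬝ᵥ (gEx x y).mulVec ![0, 1]) = 0 := by
  intro x y _ _ _ _
  refine ⟨?_, ?_, ?_⟩
  · rw [gEx, det_nullForm]
    norm_num
  · rw [gEx, dotProduct_nullForm_mulVec]
    ring
  · rw [gEx, dotProduct_nullForm_mulVec]
    ring
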